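/- arXiv:1705.05013 — 4 statements merged into one kernel-verified Lean document; each statement's English description precedes it below -/
import Mathlib

section
/- The function V(x, θ) = (K τ₁ / 2)(x − ω/K)² + ∫₀^θ v_e(s) ds is nonnegative and its derivative along trajectories of the active-PI PLL system ẋ = v_e(θ)/τ₁, θ̇ = ω − K(x + (τ₂/τ₁) v_e(θ)) equals −K (τ₂/τ₁) v_e(θ)², hence is nonpositive, where v_e(θ) = (1/2) sin θ. -/
/-! Along a trajectory, `d/dt (Kτ₁/2)(x − ω/K)² = (Kx − ω) v_e(θ)` and
`d/dt ∫₀^θ v_e = v_e(θ) θ̇ = v_e(θ)(ω − Kx) − K(τ₂/τ₁) v_e(θ)²`: the cross terms cancel. -/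

open Real

lemma integral_half_sin (b : ℝ) :
    ∫ s in (0:ℝ)..b, (1/2) * sin s = (1 - cos b) / 2 := by
  rw [intervalIntegral.integral_const_mul, integral_sin, cos_zero]
  ring

lemma integral_half_sin_nonneg (b : ℝ) : 0 ≤ ∫ s in (0:ℝ)..b, (1/2) * sin s := by
  rw [integral_half_sin]
  linarith [cos_le_one b]

theorem hasDerivAt_pll_lyapunov {K τ₁ τ₂ ω : ℝ} (hK : K ≠ 0) (hτ₁ : τ₁ ≠ 0)
    {v F x θ : ℝ → ℝ} {t : ℝ} (hF : HasDerivAt F (v (θ t)) (θ t))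
    (hx : HasDerivAt x (v (θ t) / τ₁) t)
    (hθ : HasDerivAt θ (ω - K * (x t + τ₂ / τ₁ * v (θ t))) t) :
    HasDerivAt (fun s => K * τ₁ / 2 * (x s - ω / K) ^ 2 + F (θ s))
      (-(K * (τ₂ / τ₁) * v (θ t) ^ 2)) t := by
  refine ((((hx.sub_const (ω / K)).pow 2).const_mul (K * τ₁ / 2)).add
    (hF.comp t hθ)).congr_deriv ?_
  push_cast
  field_simp
  ring

/-- The Lyapunov function
`V(x,θ) = (Kτ₁/2)(x − ω/K)² + ∫₀^θ (1/2) sin s ds` is nonnegative and its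
derivative along trajectories of the active-PI PLL equals
`−K(τ₂/τ₁)((1/2) sin θ)² ≤ 0`. -/
theorem activePI_lyapunov_derivative
    (K τ₁ τ₂ ω : ℝ) (hK : 0 < K) (hτ₁ : 0 < τ₁) (hτ₂ : 0 < τ₂)
    (x θ : ℝ → ℝ)
    (hx : ∀ t, HasDerivAt x (Real.sin (θ t) / (2 * τ₁)) t)
    (hθ : ∀ t, HasDerivAt θ
      (ω - K * (x t + τ₂ / (2 * τ₁) * Real.sin (θ t))) t) :
    (∀ a b : ℝ, 0 ≤ K * τ₁ / 2 * (a - ω / K) ^ 2 + ∫ s in (0:ℝ)..b, (1/2) * Real.sin s) ∧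
    (∀ t, HasDerivAt
      (fun s => K * τ₁ / 2 * (x s - ω / K) ^ 2 + ∫ u in (0:ℝ)..(θ s), (1/2) * Real.sin u)
      (-(K * (τ₂ / τ₁) * ((1/2) * Real.sin (θ t)) ^ 2)) t) ∧
    (∀ t, -(K * (τ₂ / τ₁) * ((1/2) * Real.sin (θ t)) ^ 2) ≤ 0) := by
  refine ⟨fun a b => add_nonneg (by positivity) (integral_half_sin_nonneg b),
    fun t => ?_, fun t => neg_nonpos.2 (by positivity)⟩
  have hprimitive : HasDerivAt (fun b => ∫ u in (0:ℝ)..b, (1/2) * sin u) ((1/2) * sin (θ t)) (θ t) :=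
    ((continuous_const.mul continuous_sin).integral_hasStrictDerivAt 0 (θ t)).hasDerivAt
  refine hasDerivAt_pll_lyapunov (v := fun u => (1/2) * sin u) hK.ne' hτ₁.ne'
    hprimitive ((hx t).congr_deriv ?_) ((hθ t).congr_deriv ?_) <;> ring
end

section
/- For the active-PI PLL system with sinusoidal PD characteristic, along any solution the Lyapunov function V(x, θ) = (K τ₁/2)(x − ω/K)² + (1 − cos θ)/2 is non-increasing in time. -/
/-- Along any solution of the active-PI PLL with sinusoidal PD,
`V(x,θ) = (Kτ₁/2)(x − ω/K)² + (1 − cos θ)/2` is non-increasing in time. -/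
theorem activePI_lyapunov_nonincreasing
    (K τ₁ τ₂ ω : ℝ) (hK : 0 < K) (hτ₁ : 0 < τ₁) (hτ₂ : 0 < τ₂)
    (x θ : ℝ → ℝ)
    (hx : ∀ t, 0 ≤ t → HasDerivAt x (Real.sin (θ t) / (2 * τ₁)) t)
    (hθ : ∀ t, 0 ≤ t → HasDerivAt θ
      (ω - K * (x t + τ₂ / (2 * τ₁) * Real.sin (θ t))) t) :
    ∀ s t : ℝ, 0 ≤ s → s ≤ t →
      K * τ₁ / 2 * (x t - ω / K) ^ 2 + (1 - Real.cos (θ t)) / 2 ≤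
      K * τ₁ / 2 * (x s - ω / K) ^ 2 + (1 - Real.cos (θ s)) / 2 := by
  set V : ℝ → ℝ := fun t => K * τ₁ / 2 * (x t - ω / K) ^ 2 + (1 - Real.cos (θ t)) / 2 with hV
  have hVderiv : ∀ t, 0 ≤ t →
      HasDerivAt V (-(K * τ₂ / (4 * τ₁)) * Real.sin (θ t) ^ 2) t := by
    intro t ht
    have h1 : HasDerivAt (fun u => K * τ₁ / 2 * (x u - ω / K) ^ 2)
        (K * τ₁ / 2 * (2 * (x t - ω / K) * (Real.sin (θ t) / (2 * τ₁)))) t := by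
      have := (((hx t ht).sub_const (ω / K)).pow 2).const_mul (K * τ₁ / 2)
      simpa using this
    have h2 : HasDerivAt (fun u => (1 - Real.cos (θ u)) / 2)
        ((Real.sin (θ t) * (ω - K * (x t + τ₂ / (2 * τ₁) * Real.sin (θ t)))) / 2) t := by
      have hc : HasDerivAt (fun u => Real.cos (θ u))
          (-Real.sin (θ t) * (ω - K * (x t + τ₂ / (2 * τ₁) * Real.sin (θ t)))) t :=
        (Real.hasDerivAt_cos (θ t)).comp t (hθ t ht)
      have := ((hasDerivAt_const t (1:ℝ)).sub hc).div_const 2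
      simpa using this
    have h := h1.add h2
    have heq : K * τ₁ / 2 * (2 * (x t - ω / K) * (Real.sin (θ t) / (2 * τ₁))) +
        (Real.sin (θ t) * (ω - K * (x t + τ₂ / (2 * τ₁) * Real.sin (θ t)))) / 2 =
        -(K * τ₂ / (4 * τ₁)) * Real.sin (θ t) ^ 2 := by
      field_simp
      ring
    rw [heq] at h
    exact h
  intro s t hs hst
  have hanti : AntitoneOn V (Set.Ici (0:ℝ)) := by
    apply antitoneOn_of_deriv_nonpos (convex_Ici (0:ℝ))
    · exact fun u hu => ((hVderiv u hu).continuousAt).continuousWithinAt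
    · intro u hu
      rw [interior_Ici] at hu
      exact ((hVderiv u (le_of_lt hu)).differentiableAt).differentiableWithinAt
    · intro u hu
      rw [interior_Ici] at hu
      rw [(hVderiv u (le_of_lt hu)).deriv]
      apply mul_nonpos_of_nonpos_of_nonneg
      · have : 0 < K * τ₂ / (4 * τ₁) := by positivity
        linarith
      · positivity
  exact hanti (Set.mem_Ici.mpr hs) (Set.mem_Ici.mpr (hs.trans hst)) hst
end

section
/- For the active-PI PLL system with sinusoidal PD characteristic and ω = 0, every point in the sublevel set {V < 1} of the Lyapunov function V(x, θ) = (Kτ₁/2)x² + (1 − cos θ)/2 with θ ∈ (−π, π) gives rise to a solution along which V remains less than 1 for all t ≥ 0, hence θ(t) stays in (−π, π) modulo the constraint cos θ(t) > 1 − 2V(x(0), θ(0)); in particular |θ(t)| never reaches π, so no cycle slipping occurs. -/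
/-!
Along solutions `V(x, θ) = (Kτ₁/2)x² + (1 − cos θ)/2` has derivative `−(Kτ₂/(4τ₁)) sin² θ ≤ 0`,
so it stays below its initial value `< 1`. Since `V(x, ±π) ≥ 1`, the continuous phase `θ`
can never reach `±π`; starting in `(−π, π)` it stays there, and two phases in `(−π, π)`
differ by less than `2π`.
-/

open Real Set

noncomputable def pllLyapunov (K τ₁ x θ : ℝ) : ℝ :=
  K * τ₁ / 2 * x ^ 2 + (1 - cos θ) / 2

theorem neg_one_lt_cos_of_pllLyapunov_lt_one {K τ₁ x θ : ℝ} (hKτ₁ : 0 ≤ K * τ₁)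
    (h : pllLyapunov K τ₁ x θ < 1) : -1 < cos θ := by
  unfold pllLyapunov at h
  nlinarith [mul_nonneg hKτ₁ (sq_nonneg x)]

theorem hasDerivAt_pllLyapunov {K τ₁ τ₂ t : ℝ} {x θ : ℝ → ℝ} (hτ₁ : τ₁ ≠ 0)
    (hx : HasDerivAt x (sin (θ t) / (2 * τ₁)) t)
    (hθ : HasDerivAt θ (-(K * (x t + τ₂ / (2 * τ₁) * sin (θ t)))) t) :
    HasDerivAt (fun s => pllLyapunov K τ₁ (x s) (θ s))
      (-(K * τ₂ / (4 * τ₁)) * sin (θ t) ^ 2) t := by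
  refine (((hx.fun_pow 2).const_mul (K * τ₁ / 2)).add
    (((hasDerivAt_cos (θ t)).comp t hθ).const_sub 1 |>.div_const 2)).congr_deriv ?_
  field_simp
  ring

theorem antitoneOn_pllLyapunov {K τ₁ τ₂ : ℝ} {x θ : ℝ → ℝ}
    (hK : 0 ≤ K) (hτ₁ : 0 < τ₁) (hτ₂ : 0 ≤ τ₂)
    (hx : ∀ t, 0 ≤ t → HasDerivAt x (sin (θ t) / (2 * τ₁)) t)
    (hθ : ∀ t, 0 ≤ t → HasDerivAt θ (-(K * (x t + τ₂ / (2 * τ₁) * sin (θ t)))) t) :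
    AntitoneOn (fun t => pllLyapunov K τ₁ (x t) (θ t)) (Ici 0) := by
  have hV : ∀ t ∈ Ici (0 : ℝ), HasDerivAt (fun s => pllLyapunov K τ₁ (x s) (θ s))
      (-(K * τ₂ / (4 * τ₁)) * sin (θ t) ^ 2) t :=
    fun t ht => hasDerivAt_pllLyapunov hτ₁.ne' (hx t ht) (hθ t ht)
  refine antitoneOn_of_hasDerivWithinAt_nonpos (convex_Ici 0)
    (fun t ht => (hV t ht).continuousAt.continuousWithinAt)
    (fun t ht => (hV t (interior_subset ht)).hasDerivWithinAt) fun t _ => ?_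
  have : 0 ≤ K * τ₂ / (4 * τ₁) := by positivity
  nlinarith [sq_nonneg (sin (θ t))]

theorem IsPreconnected.mapsTo_Ioo_of_ne {s : Set ℝ} {f : ℝ → ℝ} {a b t₀ : ℝ}
    (hs : IsPreconnected s) (hf : ContinuousOn f s) (ht₀ : t₀ ∈ s) (h₀ : f t₀ ∈ Ioo a b)
    (ha : ∀ t ∈ s, f t ≠ a) (hb : ∀ t ∈ s, f t ≠ b) : MapsTo f s (Ioo a b) := by
  intro t ht
  by_contra hout
  rcases not_and_or.mp hout with hle | hge
  · obtain ⟨u, hu, hua⟩ :=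
      hs.intermediate_value ht ht₀ hf ⟨not_lt.mp hle, h₀.1.le⟩
    exact ha u hu hua
  · obtain ⟨u, hu, hub⟩ :=
      hs.intermediate_value ht₀ ht hf ⟨h₀.2.le, not_lt.mp hge⟩
    exact hb u hu hub

theorem activePI_no_cycle_slipping_general
    (K τ₁ τ₂ : ℝ) (hK : 0 < K) (hτ₁ : 0 < τ₁) (hτ₂ : 0 < τ₂)
    (x θ : ℝ → ℝ)
    (hx : ∀ t, 0 ≤ t → HasDerivAt x (Real.sin (θ t) / (2 * τ₁)) t)
    (hθ : ∀ t, 0 ≤ t → HasDerivAt θ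
      (-(K * (x t + τ₂ / (2 * τ₁) * Real.sin (θ t)))) t)
    (hθ0 : θ 0 ∈ Set.Ioo (-Real.pi) Real.pi)
    (hV0 : K * τ₁ / 2 * (x 0) ^ 2 + (1 - Real.cos (θ 0)) / 2 < 1) :
    (∀ t, 0 ≤ t →
      K * τ₁ / 2 * (x t) ^ 2 + (1 - Real.cos (θ t)) / 2 < 1) ∧
    (∀ t, 0 ≤ t → |θ t| < Real.pi) ∧
    ¬ (∃ t > (0:ℝ), 2 * Real.pi ≤ |θ t - θ 0|) := by
  have hV_lt : ∀ t, 0 ≤ t → pllLyapunov K τ₁ (x t) (θ t) < 1 := fun t ht =>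
    (antitoneOn_pllLyapunov hK.le hτ₁ hτ₂.le hx hθ self_mem_Ici ht ht).trans_lt hV0
  have hcos : ∀ t ∈ Ici (0 : ℝ), -1 < cos (θ t) := fun t ht =>
    neg_one_lt_cos_of_pllLyapunov_lt_one (by positivity) (hV_lt t ht)
  have hθ_mem : MapsTo θ (Ici 0) (Ioo (-π) π) :=
    isPreconnected_Ici.mapsTo_Ioo_of_ne
      (fun t ht => (hθ t ht).continuousAt.continuousWithinAt) self_mem_Ici hθ0
      (fun t ht h => by simpa [h] using hcos t ht) (fun t ht h => by simpa [h] using hcos t ht)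
  have habs : ∀ t, 0 ≤ t → |θ t| < π := fun t ht => abs_lt.mpr (hθ_mem ht)
  refine ⟨hV_lt, habs, ?_⟩
  rintro ⟨t, ht, hslip⟩
  linarith [abs_sub (θ t) (θ 0), habs t ht.le, habs 0 le_rfl]

/-- For the active-PI PLL with sinusoidal PD and `ω = 0`, any
solution starting in the sublevel set `{V < 1}` with `θ(0) ∈ (−π, π)`, where
`V(x,θ) = (Kτ₁/2)x² + (1 − cos θ)/2`, satisfies `V < 1` for all `t ≥ 0`,
`|θ(t)| < π` for all `t ≥ 0`, and no cycle slipping occurs. -/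
theorem activePI_no_cycle_slipping
    (K τ₁ τ₂ : ℝ) (hK : 0 < K) (hτ₁ : 0 < τ₁) (hτ₂ : 0 < τ₂)
    (x θ : ℝ → ℝ)
    (hx : ∀ t, 0 ≤ t → HasDerivAt x (Real.sin (θ t) / (2 * τ₁)) t)
    (hθ : ∀ t, 0 ≤ t → HasDerivAt θ
      (-(K * (x t + τ₂ / (2 * τ₁) * Real.sin (θ t)))) t)
    (hcont : Continuous θ)
    (hθ0 : θ 0 ∈ Set.Ioo (-Real.pi) Real.pi)
    (hV0 : K * τ₁ / 2 * (x 0) ^ 2 + (1 - Real.cos (θ 0)) / 2 < 1) :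
    (∀ t, 0 ≤ t →
      K * τ₁ / 2 * (x t) ^ 2 + (1 - Real.cos (θ t)) / 2 < 1) ∧
    (∀ t, 0 ≤ t → |θ t| < Real.pi) ∧
    ¬ (∃ t > (0:ℝ), 2 * Real.pi ≤ |θ t - θ 0|) :=
  activePI_no_cycle_slipping_general K τ₁ τ₂ hK hτ₁ hτ₂ x θ hx hθ hθ0 hV0
end

section
/- For the active-PI PLL system with sinusoidal PD characteristic, the only solutions along which the Lyapunov derivative −K(τ₂/τ₁)(sin θ/2)² vanishes identically are the constant solutions at equilibria: if a solution satisfies sin(θ(t)) = 0 for all t, then θ(t) is constant (equal to a multiple of π) and x(t) ≡ ω/K. -/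
/-! The zero set `ℤπ` of `sin` is discrete, so a continuous `θ` with `sin ∘ θ = 0` on the
connected half-line `[0, ∞)` is constant there. Hence `θ' = 0`, and the `θ`-equation, in which
the `sin θ` term also vanishes, forces `ω - K x = 0`. -/

open Real Set

theorem Real.sin_eq_zero_iff_mem_zmultiples {x : ℝ} :
    sin x = 0 ↔ x ∈ AddSubgroup.zmultiples π := by
  simp [sin_eq_zero_iff, AddSubgroup.mem_zmultiples_iff]

theorem IsPreconnected.eq_of_sin_eq_zero {s : Set ℝ} (hs : IsPreconnected s) {f : ℝ → ℝ}
    (hf : ContinuousOn f s) (hsin : ∀ t ∈ s, sin (f t) = 0) {a b : ℝ} (ha : a ∈ s)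
    (hb : b ∈ s) : f a = f b :=
  hs.constant_of_mapsTo (isDiscrete_iff_discreteTopology.mpr
    (inferInstance : DiscreteTopology (AddSubgroup.zmultiples π))) hf
    (fun t ht => sin_eq_zero_iff_mem_zmultiples.mp (hsin t ht)) ha hb

theorem HasDerivAt.eq_zero_of_forall_le_eq {f : ℝ → ℝ} {f' t : ℝ} (hf : HasDerivAt f f' t)
    (hconst : ∀ s, t ≤ s → f s = f t) : f' = 0 :=
  (uniqueDiffOn_Ici t t self_mem_Ici).eq_deriv _ hf.hasDerivWithinAt <|
    (hasDerivWithinAt_const t _ (f t)).congr (fun s hs => hconst s hs) rfl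

theorem activePI_invariant_set_only_equilibria_general
    (K τ₁ τ₂ ω : ℝ) (hK : 0 < K)
    (x θ : ℝ → ℝ)
    (hθ : ∀ t, 0 ≤ t → HasDerivAt θ
      (ω - K * (x t + τ₂ / (2 * τ₁) * Real.sin (θ t))) t)
    (hcont : ContinuousOn θ (Set.Ici 0))
    (hsin : ∀ t, 0 ≤ t → Real.sin (θ t) = 0) :
    (∀ t, 0 ≤ t → θ t = θ 0) ∧
    (∃ n : ℤ, θ 0 = n * Real.pi) ∧
    (∀ t, 0 ≤ t → x t = ω / K) := by
  have hθconst : ∀ s t, 0 ≤ s → 0 ≤ t → θ s = θ t := fun s t hs ht =>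
    isPreconnected_Ici.eq_of_sin_eq_zero hcont hsin hs ht
  refine ⟨fun t ht => hθconst t 0 ht le_rfl,
    (sin_eq_zero_iff.mp (hsin 0 le_rfl)).imp fun n hn => hn.symm, fun t ht => ?_⟩
  have hθ' := (hθ t ht).eq_zero_of_forall_le_eq fun s hs => hθconst s t (ht.trans hs) ht
  rw [hsin t ht, mul_zero, add_zero] at hθ'
  field_simp
  linarith

/-- For the active-PI PLL with sinusoidal PD, if a solution
satisfies `sin(θ(t)) = 0` for all `t ≥ 0`, then it is a constant equilibrium
solution: `θ(t) ≡ θ(0)` is a multiple of `π` and `x(t) ≡ ω/K`. -/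
theorem activePI_invariant_set_only_equilibria
    (K τ₁ τ₂ ω : ℝ) (hK : 0 < K) (hτ₁ : 0 < τ₁) (hτ₂ : 0 < τ₂)
    (x θ : ℝ → ℝ)
    (hx : ∀ t, 0 ≤ t → HasDerivAt x (Real.sin (θ t) / (2 * τ₁)) t)
    (hθ : ∀ t, 0 ≤ t → HasDerivAt θ
      (ω - K * (x t + τ₂ / (2 * τ₁) * Real.sin (θ t))) t)
    (hcont : ContinuousOn θ (Set.Ici 0))
    (hsin : ∀ t, 0 ≤ t → Real.sin (θ t) = 0) :
    (∀ t, 0 ≤ t → θ t = θ 0) ∧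
    (∃ n : ℤ, θ 0 = n * Real.pi) ∧
    (∀ t, 0 ≤ t → x t = ω / K) :=
  activePI_invariant_set_only_equilibria_general K τ₁ τ₂ ω hK x θ hθ hcont hsin
end
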